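/- (Algebraic core of the uniqueness theorem for characteristic holonomy su_c(2).) Let a, b, p ∈ ℝ, let T := aφ + b·e₅₆₇, and let Q₁ := −e₁₄−e₂₃+2e₅₇, Q₂ := −e₁₃+e₂₄+2e₆₇, Q₃ := e₁₂+e₃₄−2e₅₆. Then the 8×8 matrix σ(T)² + p(σ(Q₁)² + σ(Q₂)² + σ(Q₃)²) is a scalar multiple of the identity if and only if (a = 0 and p = 0) or (p = a² and 5a + b = 0). (This is the Bianchi identity 'T² + R^c is a scalar in the Clifford algebra' for the curvature operator R^c = p(Q₁⊗Q₁ + Q₂⊗Q₂ + Q₃⊗Q₃), quantized in the Clifford algebra as p·Σ_i σ(Q_i)σ(Q_i).) -/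

import Mathlib

open Matrix BigOperators

noncomputable section

abbrev M8 : Type := Matrix (Fin 8) (Fin 8) ℝ

/-- 2-forms on ℝ⁷ -/
abbrev Lam2 : Type := AlternatingMap ℝ (Fin 7 → ℝ) ℝ (Fin 2)

/-- 3-forms on ℝ⁷ -/
abbrev Lam3 : Type := AlternatingMap ℝ (Fin 7 → ℝ) ℝ (Fin 3)

/-- standard basis of ℝ⁷ -/
def u (i : Fin 7) : Fin 7 → ℝ := Pi.single i 1

/-- standard spinor basis ψ₁,…,ψ₈ (0-indexed) -/
def ψ (k : Fin 8) : Fin 8 → ℝ := Pi.single k 1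

/-- E_{ij} : ψ_i ↦ ψ_j, ψ_j ↦ -ψ_i -/
def EE (i j : Fin 8) : M8 := Matrix.single j i 1 - Matrix.single i j 1

/-- Clifford multiplication by e₁,…,e₇ (0-indexed) -/
def e : Fin 7 → M8 :=
  ![EE 0 7 + EE 1 6 - EE 2 5 - EE 3 4,
    -EE 0 6 + EE 1 7 + EE 2 4 - EE 3 5,
    -EE 0 5 + EE 1 4 - EE 2 7 + EE 3 6,
    -EE 0 4 - EE 1 5 - EE 2 6 - EE 3 7,
    -EE 0 2 - EE 1 3 + EE 4 6 + EE 5 7,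
    EE 0 3 - EE 1 2 - EE 4 7 + EE 5 6,
    EE 0 1 - EE 2 3 - EE 4 5 + EE 6 7]

def pick2 (i j : Fin 7) : (Fin 7 → ℝ) →ₗ[ℝ] (Fin 2 → ℝ) :=
  LinearMap.pi fun m => LinearMap.proj (![i, j] m)

def pick3 (i j k : Fin 7) : (Fin 7 → ℝ) →ₗ[ℝ] (Fin 3 → ℝ) :=
  LinearMap.pi fun m => LinearMap.proj (![i, j, k] m)

/-- the 2-form e_i ∧ e_j -/
def w2 (i j : Fin 7) : Lam2 :=
  (Matrix.detRowAlternating : AlternatingMap ℝ (Fin 2 → ℝ) ℝ (Fin 2)).compLinearMap (pick2 i j)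

/-- the 3-form e_i ∧ e_j ∧ e_k -/
def w3 (i j k : Fin 7) : Lam3 :=
  (Matrix.detRowAlternating : AlternatingMap ℝ (Fin 3 → ℝ) ℝ (Fin 3)).compLinearMap (pick3 i j k)

/-- Clifford action of a 2-form -/
def σ2 (ω : Lam2) : M8 :=
  ∑ i : Fin 7, ∑ j : Fin 7, if i < j then ω ![u i, u j] • (e i * e j) else 0

/-- Clifford action of a 3-form -/
def σ3 (T : Lam3) : M8 :=
  ∑ i : Fin 7, ∑ j : Fin 7, ∑ k : Fin 7,
    if i < j ∧ j < k then T ![u i, u j, u k] • (e i * e j * e k) else 0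

/-- the skew-symmetric 7×7 matrix A_ω associated to a 2-form ω -/
def A2 (ω : Lam2) : Matrix (Fin 7) (Fin 7) ℝ :=
  ∑ i : Fin 7, ∑ j : Fin 7,
    if i < j then ω ![u i, u j] •
      (Matrix.single j i (1 : ℝ) - Matrix.single i j 1) else 0

/-- T is ω-invariant: the natural action of the 2-form ω on the 3-form T vanishes -/
def inv3 (ω : Lam2) (T : Lam3) : Prop :=
  ∀ X Y Z : Fin 7 → ℝ,
    T ![A2 ω *ᵥ X, Y, Z] + T ![X, A2 ω *ᵥ Y, Z] + T ![X, Y, A2 ω *ᵥ Z] = 0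

/-- the standard G₂ 3-form φ = e₁₂₇+e₁₃₅−e₁₄₆−e₂₃₆−e₂₄₅+e₃₄₇+e₅₆₇ -/
def φf : Lam3 :=
  w3 0 1 6 + w3 0 2 4 - w3 0 3 5 - w3 1 2 5 - w3 1 3 4 + w3 2 3 6 + w3 4 5 6

def Q1f : Lam2 := -w2 0 3 - w2 1 2 + (2:ℝ) • w2 4 6
def Q2f : Lam2 := -w2 0 2 + w2 1 3 + (2:ℝ) • w2 5 6
def Q3f : Lam2 := w2 0 1 + w2 2 3 - (2:ℝ) • w2 4 5

/-!
The generators `e i` are signed permutation matrices, and in the basis `ψ` the seven Clifford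
products making up `σ(φ)` are commuting diagonal sign matrices adding up to `diag(-7, 1, …, 1)`,
while `σ(e₅₆₇) = diag(-1, -1, -1, -1, 1, 1, 1, 1)` and
`Σ σ(Qᵢ)² = diag(0, -32, -32, -32, -12, -12, -12, -12)`. So the left-hand side is
`diag(x, y, y, y, z, z, z, z)` with `x = (7a + b)²`, `y = (a - b)² - 32p`, `z = (a + b)² - 12p`,
and it is scalar iff `y = x = z`. These two equations are linear in `p`, `a²` and `ab`:
eliminating `p` leaves `a (5a + b) = 0`, and then `p = a²`.
-/

lemma w2_apply (i j : Fin 7) (X Y : Fin 7 → ℝ) :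
    w2 i j ![X, Y] = X i * Y j - X j * Y i := by
  change Matrix.det (Matrix.of fun m n => ![X, Y] m (![i, j] n)) = _
  simp [Matrix.det_fin_two]

lemma w3_apply (i j k : Fin 7) (X Y Z : Fin 7 → ℝ) :
    w3 i j k ![X, Y, Z] =
      X i * Y j * Z k - X i * Y k * Z j - X j * Y i * Z k
        + X j * Y k * Z i + X k * Y i * Z j - X k * Y j * Z i := by
  change Matrix.det (Matrix.of fun m n => ![X, Y, Z] m (![i, j, k] n)) = _
  simp [Matrix.det_fin_three]

lemma u_mul_u (i j a b : Fin 7) :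
    u i a * u j b = if i = a ∧ j = b then 1 else 0 := by
  simp only [u, Pi.single_apply, eq_comm (a := a), eq_comm (a := b)]
  split_ifs <;> simp_all

lemma u_mul_u_mul_u (i j k a b c : Fin 7) :
    u i a * u j b * u k c = if i = a ∧ j = b ∧ k = c then 1 else 0 := by
  simp only [u, Pi.single_apply, eq_comm (a := a), eq_comm (a := b), eq_comm (a := c)]
  split_ifs <;> simp_all

lemma w2_apply_u {i j i' j' : Fin 7} (h : i < j) (h' : i' < j') :
    w2 i j ![u i', u j'] = if i' = i ∧ j' = j then 1 else 0 := by
  simp only [Fin.lt_def] at h h'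
  simp only [w2_apply, u_mul_u, Fin.ext_iff]
  split_ifs <;> first | omega | norm_num

lemma w3_apply_u {i j k i' j' k' : Fin 7} (h : i < j ∧ j < k) (h' : i' < j' ∧ j' < k') :
    w3 i j k ![u i', u j', u k'] = if i' = i ∧ j' = j ∧ k' = k then 1 else 0 := by
  simp only [Fin.lt_def] at h h'
  simp only [w3_apply, u_mul_u_mul_u, Fin.ext_iff]
  split_ifs <;> first | omega | norm_num

def σ2ₗ : Lam2 →ₗ[ℝ] M8 where
  toFun := σ2
  map_add' ω ω' := by
    simp only [σ2, AlternatingMap.add_apply, add_smul, ← Finset.sum_add_distrib, ite_add_ite,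
      add_zero]
  map_smul' c ω := by
    simp only [σ2, AlternatingMap.smul_apply, smul_eq_mul, mul_smul, Finset.smul_sum, smul_ite,
      smul_zero, RingHom.id_apply]

def σ3ₗ : Lam3 →ₗ[ℝ] M8 where
  toFun := σ3
  map_add' T T' := by
    simp only [σ3, AlternatingMap.add_apply, add_smul, ← Finset.sum_add_distrib, ite_add_ite,
      add_zero]
  map_smul' c T := by
    simp only [σ3, AlternatingMap.smul_apply, smul_eq_mul, mul_smul, Finset.smul_sum, smul_ite,
      smul_zero, RingHom.id_apply]

lemma σ2ₗ_apply (ω : Lam2) : σ2ₗ ω = σ2 ω := rfl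

lemma σ3ₗ_apply (T : Lam3) : σ3ₗ T = σ3 T := rfl

lemma σ2_w2 {i j : Fin 7} (hij : i < j) : σ2 (w2 i j) = e i * e j := by
  have summand : ∀ i' j' : Fin 7,
      (if i' < j' then w2 i j ![u i', u j'] • (e i' * e j') else 0)
        = if i' = i ∧ j' = j then e i * e j else 0 := by
    intro i' j'
    split_ifs with h' hij' hij'
    · obtain ⟨rfl, rfl⟩ := hij'
      rw [w2_apply_u hij h', if_pos ⟨rfl, rfl⟩, one_smul]
    · rw [w2_apply_u hij h', if_neg hij', zero_smul]
    · obtain ⟨rfl, rfl⟩ := hij'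
      exact absurd hij h'
    · rfl
  simp [σ2, summand, ite_and]

lemma σ3_w3 {i j k : Fin 7} (hij : i < j) (hjk : j < k) :
    σ3 (w3 i j k) = e i * e j * e k := by
  have summand : ∀ i' j' k' : Fin 7,
      (if i' < j' ∧ j' < k' then w3 i j k ![u i', u j', u k'] • (e i' * e j' * e k') else 0)
        = if i' = i ∧ j' = j ∧ k' = k then e i * e j * e k else 0 := by
    intro i' j' k'
    split_ifs with h' hijk' hijk'
    · obtain ⟨rfl, rfl, rfl⟩ := hijk'
      rw [w3_apply_u ⟨hij, hjk⟩ h', if_pos ⟨rfl, rfl, rfl⟩, one_smul]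
    · rw [w3_apply_u ⟨hij, hjk⟩ h', if_neg hijk', zero_smul]
    · obtain ⟨rfl, rfl, rfl⟩ := hijk'
      exact absurd ⟨hij, hjk⟩ h'
    · rfl
  simp [σ3, summand, ite_and]

-- `e` has integer entries, so identities between products of the `e i` can be decided over `ℤ`
-- and transported along the ring map `ℤ → ℝ`.
def EEℤ (i j : Fin 8) : Matrix (Fin 8) (Fin 8) ℤ := Matrix.single j i 1 - Matrix.single i j 1

def eℤ : Fin 7 → Matrix (Fin 8) (Fin 8) ℤ :=
  ![EEℤ 0 7 + EEℤ 1 6 - EEℤ 2 5 - EEℤ 3 4,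
    -EEℤ 0 6 + EEℤ 1 7 + EEℤ 2 4 - EEℤ 3 5,
    -EEℤ 0 5 + EEℤ 1 4 - EEℤ 2 7 + EEℤ 3 6,
    -EEℤ 0 4 - EEℤ 1 5 - EEℤ 2 6 - EEℤ 3 7,
    -EEℤ 0 2 - EEℤ 1 3 + EEℤ 4 6 + EEℤ 5 7,
    EEℤ 0 3 - EEℤ 1 2 - EEℤ 4 7 + EEℤ 5 6,
    EEℤ 0 1 - EEℤ 2 3 - EEℤ 4 5 + EEℤ 6 7]

lemma EE_eq_mapMatrix_EEℤ (i j : Fin 8) : EE i j = (Int.castRingHom ℝ).mapMatrix (EEℤ i j) := by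
  simp only [EE, EEℤ, map_sub, RingHom.mapMatrix_apply, Matrix.map_single, map_one]

lemma e_eq_mapMatrix_eℤ (i : Fin 7) : e i = (Int.castRingHom ℝ).mapMatrix (eℤ i) := by
  fin_cases i <;>
    simp only [e, eℤ, Fin.reduceFinMk, Matrix.cons_val, EE_eq_mapMatrix_EEℤ, map_add, map_sub,
      map_neg]

lemma φ_clifford_eℤ :
    eℤ 0 * eℤ 1 * eℤ 6 + eℤ 0 * eℤ 2 * eℤ 4 - eℤ 0 * eℤ 3 * eℤ 5 - eℤ 1 * eℤ 2 * eℤ 5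
      - eℤ 1 * eℤ 3 * eℤ 4 + eℤ 2 * eℤ 3 * eℤ 6 + eℤ 4 * eℤ 5 * eℤ 6
      = Matrix.diagonal ![-7, 1, 1, 1, 1, 1, 1, 1] := by
  decide

lemma e567_clifford_eℤ : eℤ 4 * eℤ 5 * eℤ 6 = Matrix.diagonal ![-1, -1, -1, -1, 1, 1, 1, 1] := by
  decide

lemma Q_clifford_sq_sum_eℤ :
    (-(eℤ 0 * eℤ 3) - eℤ 1 * eℤ 2 + 2 • (eℤ 4 * eℤ 6)) ^ 2
      + (-(eℤ 0 * eℤ 2) + eℤ 1 * eℤ 3 + 2 • (eℤ 5 * eℤ 6)) ^ 2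
      + (eℤ 0 * eℤ 1 + eℤ 2 * eℤ 3 - 2 • (eℤ 4 * eℤ 5)) ^ 2
      = Matrix.diagonal ![0, -32, -32, -32, -12, -12, -12, -12] := by
  decide

lemma mapMatrix_intCast_diagonal (d : Fin 8 → ℤ) :
    (Int.castRingHom ℝ).mapMatrix (Matrix.diagonal d) = Matrix.diagonal (fun k => (d k : ℝ)) :=
  Matrix.diagonal_map (map_zero _)

lemma σ3_φf : σ3 φf = Matrix.diagonal ![-7, 1, 1, 1, 1, 1, 1, 1] := by
  simp only [← σ3ₗ_apply, φf, map_add, map_sub]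
  simp only [σ3ₗ_apply, σ3_w3, Fin.reduceLT, e_eq_mapMatrix_eℤ, ← map_mul, ← map_add, ← map_sub]
  rw [φ_clifford_eℤ, mapMatrix_intCast_diagonal]
  congr 1; ext k; fin_cases k <;> simp

lemma σ3_w3_456 : σ3 (w3 4 5 6) = Matrix.diagonal ![-1, -1, -1, -1, 1, 1, 1, 1] := by
  rw [σ3_w3 (by decide) (by decide)]
  simp only [e_eq_mapMatrix_eℤ, ← map_mul]
  rw [e567_clifford_eℤ, mapMatrix_intCast_diagonal]
  congr 1; ext k; fin_cases k <;> simp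

lemma σ2_Q_sq_sum :
    σ2 Q1f ^ 2 + σ2 Q2f ^ 2 + σ2 Q3f ^ 2
      = Matrix.diagonal ![0, -32, -32, -32, -12, -12, -12, -12] := by
  simp only [← σ2ₗ_apply, Q1f, Q2f, Q3f, map_add, map_sub, map_neg, map_smul]
  simp only [σ2ₗ_apply, σ2_w2, Fin.reduceLT, two_smul, e_eq_mapMatrix_eℤ, ← map_mul, ← map_add,
    ← map_sub, ← map_neg, ← map_pow]
  have h := Q_clifford_sq_sum_eℤ
  simp only [two_smul] at h
  rw [h, mapMatrix_intCast_diagonal]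
  congr 1; ext k; fin_cases k <;> simp

lemma bianchi_lhs_eq_diagonal (a b p : ℝ) :
    σ3 (a • φf + b • w3 4 5 6) ^ 2 + p • (σ2 Q1f ^ 2 + σ2 Q2f ^ 2 + σ2 Q3f ^ 2)
      = Matrix.diagonal ![(7 * a + b) ^ 2,
          (a - b) ^ 2 - 32 * p, (a - b) ^ 2 - 32 * p, (a - b) ^ 2 - 32 * p,
          (a + b) ^ 2 - 12 * p, (a + b) ^ 2 - 12 * p, (a + b) ^ 2 - 12 * p, (a + b) ^ 2 - 12 * p] := by
  rw [← σ3ₗ_apply, map_add, map_smul, map_smul, σ3ₗ_apply, σ3ₗ_apply, σ3_φf, σ3_w3_456,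
    σ2_Q_sq_sum, ← Matrix.diagonal_smul, ← Matrix.diagonal_smul, ← Matrix.diagonal_smul,
    Matrix.diagonal_add, sq, Matrix.diagonal_mul_diagonal, Matrix.diagonal_add]
  congr 1; ext k; fin_cases k <;> simp <;> ring

lemma diagonal_eq_smul_one_iff (x y z c : ℝ) :
    Matrix.diagonal ![x, y, y, y, z, z, z, z] = c • (1 : M8) ↔ x = c ∧ y = c ∧ z = c := by
  rw [Matrix.smul_one_eq_diagonal, Matrix.diagonal_eq_diagonal_iff]
  simp [Fin.forall_fin_succ]

lemma bianchi_conditions_iff (a b p : ℝ) :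
    ((a - b) ^ 2 - 32 * p = (7 * a + b) ^ 2 ∧ (a + b) ^ 2 - 12 * p = (7 * a + b) ^ 2)
      ↔ (a = 0 ∧ p = 0) ∨ (p = a ^ 2 ∧ 5 * a + b = 0) := by
  constructor
  · rintro ⟨hy, hz⟩
    have hab : a * (5 * a + b) = 0 := by linarith
    have hp : p = a ^ 2 := by linarith
    rcases mul_eq_zero.mp hab with ha | hb
    · exact Or.inl ⟨ha, by rw [hp, ha]; ring⟩
    · exact Or.inr ⟨hp, hb⟩
  · rintro (⟨rfl, rfl⟩ | ⟨rfl, hb⟩)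
    · constructor <;> ring
    · obtain rfl : b = -(5 * a) := by linarith
      constructor <;> ring

/-- Bianchi identity for holonomy su_c(2): σ(T)² + pΣσ(Qᵢ)² is a scalar
iff (a = 0 ∧ p = 0) or (p = a² ∧ 5a + b = 0), where T = aφ + b e₅₆₇. -/
theorem stmt_14 (a b p : ℝ) :
    (∃ lam : ℝ,
        σ3 (a • φf + b • w3 4 5 6) ^ 2
          + p • (σ2 Q1f ^ 2 + σ2 Q2f ^ 2 + σ2 Q3f ^ 2) = lam • (1 : M8))
      ↔ ((a = 0 ∧ p = 0) ∨ (p = a ^ 2 ∧ 5 * a + b = 0)) := by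
  simp only [bianchi_lhs_eq_diagonal, diagonal_eq_smul_one_iff, ← bianchi_conditions_iff]
  constructor
  · rintro ⟨c, hx, hy, hz⟩
    exact ⟨hy.trans hx.symm, hz.trans hx.symm⟩
  · rintro ⟨hy, hz⟩
    exact ⟨_, rfl, hy, hz⟩
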